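/- For the two-query instance under mechanism ONE with equally likely queries q₁ (ads A=(0.5,z₁), B=(0.6,z₂)) and q₂ (ads C=(0.5,z₁), D=(0.6,z₂), E=(0.2,z₂), F=(0.3,z₁)), all bids equal to 1, no prediction map f is self-calibrated: if f(z₁) > f(z₂) the observed CTRs are (z₁: 13/30, z₂: 0.6); if f(z₁) < f(z₂) they are (z₁: 0.5, z₂: 7/15); if f(z₁) = f(z₂) they are (z₁: 0.45, z₂: 0.5); in every case the observed CTR of some bucket differs from f of that bucket. -/

import Mathlib

/-! The observed CTRs depend on `f` only through the order of `f1` and `f2`, and in each of the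
three regimes they are ordered the other way (`13/30 < 0.6`, `0.5 > 7/15`, `0.45 ≠ 0.5`), so a
self-calibrated `f` would have to contradict its own regime. -/

open Classical

/- Mechanism ONE, all bids 1, two buckets z₁, z₂ and four equally likely queries:
q₁ = {A=(p=0.5, z₁)}, q₂ = {B=(0.6, z₂)}, q₃ = {C=(0.5, z₁), D=(0.6, z₂)},
q₄ = {E=(0.2, z₂), F=(0.3, z₁)}.  On each query the candidate with maximal f(z)
shows, ties broken uniformly at random.  A prediction map is the pair (f1,f2). -/

/-- probability (given its query) that a z₁-ad facing a z₂-ad shows -/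
noncomputable def w1 (f1 f2 : ℝ) : ℝ := if f1 > f2 then 1 else if f2 > f1 then 0 else 1/2
/-- probability (given its query) that a z₂-ad facing a z₁-ad shows -/
noncomputable def w2 (f1 f2 : ℝ) : ℝ := if f2 > f1 then 1 else if f1 > f2 then 0 else 1/2

/-- observed CTR of bucket z₁ (ads A, C, F; A always shows on its query) -/
noncomputable def obsCTR1 (f1 f2 : ℝ) : ℝ :=
  (1 * 0.5 + w1 f1 f2 * 0.5 + w1 f1 f2 * 0.3) / (1 + w1 f1 f2 + w1 f1 f2)

/-- observed CTR of bucket z₂ (ads B, D, E; B always shows on its query) -/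
noncomputable def obsCTR2 (f1 f2 : ℝ) : ℝ :=
  (1 * 0.6 + w2 f1 f2 * 0.6 + w2 f1 f2 * 0.2) / (1 + w2 f1 f2 + w2 f1 f2)

section ObservedCTR

variable {f1 f2 : ℝ}

theorem w1_of_gt (h : f2 < f1) : w1 f1 f2 = 1 := if_pos h

theorem w1_of_lt (h : f1 < f2) : w1 f1 f2 = 0 := by
  rw [w1, if_neg h.not_gt, if_pos h]

theorem w1_self (f : ℝ) : w1 f f = 1 / 2 := by
  simp only [w1, gt_iff_lt, lt_irrefl, if_false]

theorem w2_of_gt (h : f2 < f1) : w2 f1 f2 = 0 := by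
  rw [w2, if_neg h.not_gt, if_pos h]

theorem w2_of_lt (h : f1 < f2) : w2 f1 f2 = 1 := if_pos h

theorem w2_self (f : ℝ) : w2 f f = 1 / 2 := by
  simp only [w2, gt_iff_lt, lt_irrefl, if_false]

theorem obsCTR_of_gt (h : f2 < f1) : obsCTR1 f1 f2 = 13 / 30 ∧ obsCTR2 f1 f2 = 0.6 := by
  constructor
  · rw [obsCTR1, w1_of_gt h]; norm_num
  · rw [obsCTR2, w2_of_gt h]; norm_num

theorem obsCTR_of_lt (h : f1 < f2) : obsCTR1 f1 f2 = 0.5 ∧ obsCTR2 f1 f2 = 7 / 15 := by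
  constructor
  · rw [obsCTR1, w1_of_lt h]; norm_num
  · rw [obsCTR2, w2_of_lt h]; norm_num

theorem obsCTR_self (f : ℝ) : obsCTR1 f f = 0.45 ∧ obsCTR2 f f = 0.5 := by
  constructor
  · rw [obsCTR1, w1_self]; norm_num
  · rw [obsCTR2, w2_self]; norm_num

end ObservedCTR

theorem not_self_calibrated (f1 f2 : ℝ) : ¬(obsCTR1 f1 f2 = f1 ∧ obsCTR2 f1 f2 = f2) := by
  rintro ⟨h1, h2⟩
  rcases lt_trichotomy f1 f2 with hlt | rfl | hgt
  · obtain ⟨e1, e2⟩ := obsCTR_of_lt hlt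
    rw [e1] at h1
    rw [e2] at h2
    subst h1 h2
    norm_num at hlt
  · obtain ⟨e1, e2⟩ := obsCTR_self f1
    rw [e1] at h1
    rw [e2, ← h1] at h2
    norm_num at h2
  · obtain ⟨e1, e2⟩ := obsCTR_of_gt hgt
    rw [e1] at h1
    rw [e2] at h2
    subst h1 h2
    norm_num at hgt

/-- No prediction map is self-calibrated for this instance: if `f1 > f2` the observed
CTRs are (z₁ : 13/30, z₂ : 0.6); if `f1 < f2` they are (z₁ : 0.5, z₂ : 7/15); if
`f1 = f2` they are (z₁ : 0.45, z₂ : 0.5); and in every case the observed CTR of some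
bucket differs from the predicted value for that bucket. -/
theorem no_self_calibrated_map :
    ∀ f1 f2 : ℝ, 0 ≤ f1 → f1 ≤ 1 → 0 ≤ f2 → f2 ≤ 1 →
      (f1 > f2 → obsCTR1 f1 f2 = 13/30 ∧ obsCTR2 f1 f2 = 0.6) ∧
      (f1 < f2 → obsCTR1 f1 f2 = 0.5 ∧ obsCTR2 f1 f2 = 7/15) ∧
      (f1 = f2 → obsCTR1 f1 f2 = 0.45 ∧ obsCTR2 f1 f2 = 0.5) ∧
      ¬(obsCTR1 f1 f2 = f1 ∧ obsCTR2 f1 f2 = f2) := by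
  intro f1 f2 _ _ _ _
  refine ⟨obsCTR_of_gt, obsCTR_of_lt, ?_, not_self_calibrated f1 f2⟩
  rintro rfl
  exact obsCTR_self f1
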